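/- Let G be a Hausdorff ample groupoid and R a commutative ring with identity. The centre of the Steinberg algebra A_R(G) is exactly the set of class functions, where f∈A_R(G) is a class function if (1) f(x)≠0 implies d(x)=r(x), and (2) whenever d(x)=r(x)=d(z) then f(zxz⁻¹)=f(x). -/
import Mathlib


open Set Function

/-- A groupoid structure on a type `G`: a small category in which every morphism is
invertible, encoded with a total multiplication `mul` that is only meaningful on
composable pairs.  Here `d x = x⁻¹x` and `r x = xx⁻¹`, and a pair `(x, y)` is
composable exactly when `d x = r y`. -/
structure GroupoidStr (G : Type*) where
  mul : G → G → G
  inv : G → G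
  inv_inv : ∀ x, inv (inv x) = x
  /-- `x · d x = x` -/
  mul_d : ∀ x, mul x (mul (inv x) x) = x
  /-- `r x · x = x` -/
  r_mul : ∀ x, mul (mul x (inv x)) x = x
  /-- associativity on composable pairs -/
  assoc : ∀ x y z, mul (inv x) x = mul y (inv y) → mul (inv y) y = mul z (inv z) →
    mul (mul x y) z = mul x (mul y z)
  /-- `d (xy) = d y` for composable `x, y` -/
  d_comp : ∀ x y, mul (inv x) x = mul y (inv y) →
    mul (inv (mul x y)) (mul x y) = mul (inv y) y
  /-- `r (xy) = r x` for composable `x, y` -/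
  r_comp : ∀ x y, mul (inv x) x = mul y (inv y) →
    mul (mul x y) (inv (mul x y)) = mul x (inv x)
  /-- `(xy)⁻¹ = y⁻¹x⁻¹` for composable `x, y` -/
  inv_mul : ∀ x y, mul (inv x) x = mul y (inv y) → inv (mul x y) = mul (inv y) (inv x)
  /-- units are their own inverses -/
  unit_self_inv : ∀ x, inv (mul (inv x) x) = mul (inv x) x
  /-- units are idempotents -/
  unit_idem : ∀ x, mul (mul (inv x) x) (mul (inv x) x) = mul (inv x) x

namespace GroupoidStr

variable {G : Type*} (S : GroupoidStr G)

/-- The domain (source) `d x = x⁻¹ x` of `x`. -/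
def d (x : G) : G := S.mul (S.inv x) x

/-- The range `r x = x x⁻¹` of `x`. -/
def r (x : G) : G := S.mul x (S.inv x)

/-- The unit space `G⁰ = d(G) = r(G)`. -/
def unitSpace : Set G := Set.range S.d

/-- The isotropy bundle `Iso(G) = {x | d x = r x}`. -/
def IsoSet : Set G := {x | S.d x = S.r x}

/-- The orbit of a unit `u`: `{r γ : d γ = u}`. -/
def orbit (u : G) : Set G := S.r '' {γ : G | S.d γ = u}

/-- A subset `U` of the unit space is invariant if `d γ ∈ U` implies `r γ ∈ U`. -/
def IsInvariant (U : Set G) : Prop := ∀ γ : G, S.d γ ∈ U → S.r γ ∈ U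

section Top

variable [TopologicalSpace G]

/-- `G` is a topological groupoid: inversion and composition (on the set of composable
pairs, with the relative product topology) are continuous. -/
def IsTopological : Prop :=
  Continuous S.inv ∧
    Continuous fun p : {p : G × G // S.d p.1 = S.r p.2} => S.mul p.1.1 p.1.2

/-- An open bisection: an open set on which both `d` and `r` restrict to homeomorphisms
onto open subsets of the unit space. -/
def IsOpenBisection (U : Set G) : Prop :=
  IsOpen U ∧ Set.InjOn S.d U ∧ Set.InjOn S.r U ∧
    (∀ V ⊆ U, IsOpen V → IsOpen (S.d '' V)) ∧ (∀ V ⊆ U, IsOpen V → IsOpen (S.r '' V))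

/-- An étale groupoid: there is a basis of open bisections (equivalently, `d` is a local
homeomorphism). -/
def IsEtale : Prop := ∀ x : G, ∃ U, x ∈ U ∧ S.IsOpenBisection U

/-- An ample groupoid: there is a basis of compact open bisections. -/
def IsAmple : Prop :=
  ∀ (x : G) (W : Set G), x ∈ W → IsOpen W →
    ∃ U, x ∈ U ∧ U ⊆ W ∧ IsCompact U ∧ S.IsOpenBisection U

def IsCompactOpenBisection (U : Set G) : Prop := IsCompact U ∧ S.IsOpenBisection U

/-- `G` is effective if the interior of the isotropy bundle is the unit space. -/
def IsEffective : Prop := interior S.IsoSet = S.unitSpace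

variable (R : Type*) [CommRing R]

/-- The underlying set of the Steinberg algebra `A_R(G)`: locally constant,
compactly supported `R`-valued functions on `G`.  (The groupoid structure argument is
only used for the `A_R(G)` notation `S.SteinSet R`.) -/
def SteinSet (_Sg : GroupoidStr G) : Set (G → R) :=
  {f | IsLocallyConstant f ∧ HasCompactSupport f}

variable {R}

/-- Convolution: `(f * g) γ = ∑_{αβ = γ} f α * g β`. -/
noncomputable def conv (f g : G → R) : G → R := fun γ =>
  ∑ᶠ p ∈ {p : G × G | S.d p.1 = S.r p.2 ∧ S.mul p.1 p.2 = γ}, f p.1 * g p.2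

end Top

end GroupoidStr

namespace GroupoidStr

variable {G : Type*} (S : GroupoidStr G)

lemma d_inv' (x : G) : S.d (S.inv x) = S.r x := by
  show S.mul (S.inv (S.inv x)) (S.inv x) = _
  rw [S.inv_inv]; rfl

lemma r_inv' (x : G) : S.r (S.inv x) = S.d x := by
  show S.mul (S.inv x) (S.inv (S.inv x)) = _
  rw [S.inv_inv]; rfl

lemma d_d (x : G) : S.d (S.d x) = S.d x := by
  show S.mul (S.inv (S.mul (S.inv x) x)) (S.mul (S.inv x) x) = S.mul (S.inv x) x
  rw [S.unit_self_inv]; exact S.unit_idem x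

lemma r_d (x : G) : S.r (S.d x) = S.d x := by
  show S.mul (S.mul (S.inv x) x) (S.inv (S.mul (S.inv x) x)) = S.mul (S.inv x) x
  rw [S.unit_self_inv]; exact S.unit_idem x

lemma mul_d_self (x : G) : S.mul x (S.d x) = x := S.mul_d x

lemma r_mul_self (x : G) : S.mul (S.r x) x = x := S.r_mul x

lemma inv_d (x : G) : S.inv (S.d x) = S.d x := S.unit_self_inv x

lemma assoc' {x y z : G} (h1 : S.d x = S.r y) (h2 : S.d y = S.r z) :
    S.mul (S.mul x y) z = S.mul x (S.mul y z) := S.assoc x y z h1 h2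

lemma d_mul {x y : G} (h : S.d x = S.r y) : S.d (S.mul x y) = S.d y := S.d_comp x y h

lemma r_mul'' {x y : G} (h : S.d x = S.r y) : S.r (S.mul x y) = S.r x := S.r_comp x y h

lemma inv_mul_cancel_left {x y : G} (h : S.d x = S.r y) :
    S.mul (S.inv x) (S.mul x y) = y := by
  rw [← S.assoc' (S.d_inv' x) h]
  show S.mul (S.d x) y = y
  rw [h]; exact S.r_mul y

lemma mul_inv_cancel_right {x y : G} (h : S.d x = S.r y) :
    S.mul (S.mul x y) (S.inv y) = x := by
  rw [S.assoc' h (S.r_inv' y).symm]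
  show S.mul x (S.r y) = x
  rw [← h]; exact S.mul_d x

/-- The two basic facts about conjugation `(β⁻¹ α) β` of an isotropy element `α`
along `β` with `d α = r β`. -/
lemma conj_facts {α β : G} (hc : S.d α = S.r β) (hiso : S.d α = S.r α) :
    S.d β = S.r (S.mul (S.mul (S.inv β) α) β) ∧
      S.mul β (S.mul (S.mul (S.inv β) α) β) = S.mul α β := by
  have h1 : S.d (S.inv β) = S.r α := by rw [S.d_inv', ← hiso, hc]
  have h2 : S.d (S.mul (S.inv β) α) = S.r β := by rw [S.d_mul h1, ← hc]
  have h3 : S.r (S.mul (S.inv β) α) = S.d β := by rw [S.r_mul'' h1, S.r_inv']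
  have h4 : S.mul β (S.mul (S.inv β) α) = α := by
    rw [← S.assoc' (S.r_inv' β).symm h1]
    show S.mul (S.r β) α = α
    rw [← hc, hiso]; exact S.r_mul α
  constructor
  · rw [S.r_mul'' h2, h3]
  · rw [← S.assoc' h3.symm h2, h4]

/-- The two basic facts about conjugation `(α β) α⁻¹` of an isotropy element `β`
along `α` with `d α = r β`. -/
lemma conj_facts' {α β : G} (hc : S.d α = S.r β) (hiso : S.d β = S.r β) :
    S.d (S.mul (S.mul α β) (S.inv α)) = S.r α ∧
      S.mul (S.mul (S.mul α β) (S.inv α)) α = S.mul α β := by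
  have h1 : S.d (S.mul α β) = S.r (S.inv α) := by
    rw [S.d_mul hc, S.r_inv', hiso, ← hc]
  constructor
  · rw [S.d_mul h1, S.d_inv']
  · rw [S.assoc' h1 (S.d_inv' α)]
    show S.mul (S.mul α β) (S.d α) = S.mul α β
    have : S.d α = S.d (S.mul α β) := by rw [S.d_mul hc]; exact hc.trans hiso.symm
    rw [this]; exact S.mul_d (S.mul α β)

section Top

variable [TopologicalSpace G]

lemma continuous_r (hTop : S.IsTopological) : Continuous S.r := by
  have h : Continuous fun x : G =>
      (⟨(x, S.inv x), (S.r_inv' x).symm⟩ : {p : G × G // S.d p.1 = S.r p.2}) :=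
    Continuous.subtype_mk (continuous_id.prodMk hTop.1) fun x => (S.r_inv' x).symm
  exact hTop.2.comp h

variable {R : Type*} [CommRing R]

lemma indicator_mem [T2Space G] {U : Set G} (hUc : IsCompact U) (hUo : IsOpen U) :
    U.indicator (fun _ => (1 : R)) ∈ S.SteinSet R := by
  constructor
  · rw [IsLocallyConstant.iff_exists_open]
    intro x
    by_cases hx : x ∈ U
    · exact ⟨U, hUo, hx, fun y hy => by
        rw [Set.indicator_of_mem hy, Set.indicator_of_mem hx]⟩
    · exact ⟨Uᶜ, isOpen_compl_iff.2 hUc.isClosed, hx, fun y hy => by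
        rw [Set.indicator_of_notMem hy, Set.indicator_of_notMem hx]⟩
  · exact IsCompact.of_isClosed_subset hUc isClosed_closure
      (closure_minimal Set.support_indicator_subset hUc.isClosed)

lemma conv_indicator_right {U : Set G} (hinj : Set.InjOn S.d U)
    (f : G → R) {β γ : G} (hβ : β ∈ U) (hd : S.d β = S.d γ) :
    S.conv f (U.indicator fun _ => (1 : R)) γ = f (S.mul γ (S.inv β)) := by
  have hc : S.d γ = S.r (S.inv β) := by rw [S.r_inv', hd]
  have hpt_comp : S.d (S.mul γ (S.inv β)) = S.r β := by rw [S.d_mul hc, S.d_inv']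
  have hpt_mul : S.mul (S.mul γ (S.inv β)) β = γ := by
    rw [S.assoc' hc (S.d_inv' β)]
    show S.mul γ (S.d β) = γ
    rw [hd]; exact S.mul_d γ
  show (∑ᶠ p ∈ {p : G × G | S.d p.1 = S.r p.2 ∧ S.mul p.1 p.2 = γ},
      f p.1 * U.indicator (fun _ => (1 : R)) p.2) = f (S.mul γ (S.inv β))
  rw [finsum_mem_inter_support_eq
      (fun p : G × G => f p.1 * U.indicator (fun _ => (1 : R)) p.2) _
      ({(S.mul γ (S.inv β), β)} : Set (G × G)) ?_]
  · rw [finsum_mem_singleton, Set.indicator_of_mem hβ, mul_one]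
  · ext p
    simp only [Set.mem_inter_iff, Set.mem_setOf_eq, Set.mem_singleton_iff,
      Function.mem_support]
    constructor
    · rintro ⟨⟨hcp, hmp⟩, hsp⟩
      have h2U : p.2 ∈ U := by
        by_contra hn
        exact hsp (by rw [Set.indicator_of_notMem hn, mul_zero])
      have hdp : S.d p.2 = S.d β := by rw [← S.d_mul hcp, hmp, ← hd]
      have h2 : p.2 = β := hinj h2U hβ hdp
      have h1 : p.1 = S.mul γ (S.inv β) := by
        rw [← S.mul_inv_cancel_right hcp, hmp, h2]
      exact ⟨Prod.ext h1 h2, hsp⟩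
    · rintro ⟨hp, hsp⟩
      rw [hp]
      exact ⟨⟨hpt_comp, hpt_mul⟩, hp ▸ hsp⟩

lemma conv_indicator_left {U : Set G} (hinj : Set.InjOn S.r U)
    (f : G → R) {α γ : G} (hα : α ∈ U) (hr : S.r α = S.r γ) :
    S.conv (U.indicator fun _ => (1 : R)) f γ = f (S.mul (S.inv α) γ) := by
  have hc : S.d (S.inv α) = S.r γ := by rw [S.d_inv', hr]
  have hpt_comp : S.d α = S.r (S.mul (S.inv α) γ) := by
    rw [S.r_mul'' hc, S.r_inv']
  have hpt_mul : S.mul α (S.mul (S.inv α) γ) = γ := by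
    rw [← S.assoc' (S.r_inv' α).symm hc]
    show S.mul (S.r α) γ = γ
    rw [hr]; exact S.r_mul γ
  show (∑ᶠ p ∈ {p : G × G | S.d p.1 = S.r p.2 ∧ S.mul p.1 p.2 = γ},
      U.indicator (fun _ => (1 : R)) p.1 * f p.2) = f (S.mul (S.inv α) γ)
  rw [finsum_mem_inter_support_eq
      (fun p : G × G => U.indicator (fun _ => (1 : R)) p.1 * f p.2) _
      ({(α, S.mul (S.inv α) γ)} : Set (G × G)) ?_]
  · rw [finsum_mem_singleton, Set.indicator_of_mem hα, one_mul]
  · ext p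
    simp only [Set.mem_inter_iff, Set.mem_setOf_eq, Set.mem_singleton_iff,
      Function.mem_support]
    constructor
    · rintro ⟨⟨hcp, hmp⟩, hsp⟩
      have h1U : p.1 ∈ U := by
        by_contra hn
        exact hsp (by rw [Set.indicator_of_notMem hn, zero_mul])
      have hrp : S.r p.1 = S.r α := by rw [← S.r_mul'' hcp, hmp, ← hr]
      have h1 : p.1 = α := hinj h1U hα hrp
      have h2 : p.2 = S.mul (S.inv α) γ := by
        rw [← S.inv_mul_cancel_left hcp, hmp, h1]
      exact ⟨Prod.ext h1 h2, hsp⟩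
    · rintro ⟨hp, hsp⟩
      rw [hp]
      exact ⟨⟨hpt_comp, hpt_mul⟩, hp ▸ hsp⟩

lemma conv_indicator_left_zero {U : Set G} (f : G → R) {γ : G}
    (hno : ∀ α ∈ U, S.r α ≠ S.r γ) :
    S.conv (U.indicator fun _ => (1 : R)) f γ = 0 := by
  show (∑ᶠ p ∈ {p : G × G | S.d p.1 = S.r p.2 ∧ S.mul p.1 p.2 = γ},
      U.indicator (fun _ => (1 : R)) p.1 * f p.2) = 0
  rw [finsum_mem_inter_support_eq
      (fun p : G × G => U.indicator (fun _ => (1 : R)) p.1 * f p.2) _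
      (∅ : Set (G × G)) ?_]
  · rw [finsum_mem_empty]
  · ext p
    simp only [Set.mem_inter_iff, Set.mem_setOf_eq, Set.mem_empty_iff_false,
      false_and, iff_false, Function.mem_support]
    rintro ⟨⟨hcp, hmp⟩, hsp⟩
    have h1U : p.1 ∈ U := by
      by_contra hn
      exact hsp (by rw [Set.indicator_of_notMem hn, zero_mul])
    exact hno p.1 h1U (by rw [← hmp, S.r_mul'' hcp])

end Top

end GroupoidStr

/-- For a Hausdorff ample groupoid `G` and a commutative unital ring
`R`, the centre of the Steinberg algebra `A_R(G)` is exactly the set of class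
functions: `f` is central iff (1) `f x ≠ 0 → d x = r x`, and (2) whenever
`d x = r x = d z` one has `f (z x z⁻¹) = f x`. -/
theorem centre_steinberg_eq_class_functions {G : Type*} [TopologicalSpace G]
    (S : GroupoidStr G) {R : Type*} [CommRing R] [T2Space G]
    (hTop : S.IsTopological) (hAmple : S.IsAmple)
    (f : G → R) (hf : f ∈ S.SteinSet R) :
    (∀ g ∈ S.SteinSet R, S.conv f g = S.conv g f) ↔
      ((∀ x : G, f x ≠ 0 → S.d x = S.r x) ∧
        ∀ x z : G, S.d x = S.r x → S.d x = S.d z →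
          f (S.mul (S.mul z x) (S.inv z)) = f x) := by
  constructor
  · intro hcent
    constructor
    · -- (1) central implies supported on isotropy
      intro x hfx
      by_contra hne
      have hr := S.continuous_r hTop
      have hWo : IsOpen ((S.r ⁻¹' {S.r x})ᶜ) :=
        isOpen_compl_iff.2 (isClosed_singleton.preimage hr)
      have hdW : S.d x ∈ (S.r ⁻¹' {S.r x})ᶜ := by
        simp only [Set.mem_compl_iff, Set.mem_preimage, Set.mem_singleton_iff]
        rw [S.r_d]; exact hne
      obtain ⟨U, hxU, hUW, hUc, hUb⟩ := hAmple (S.d x) _ hdW hWo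
      have hχ := S.indicator_mem (R := R) hUc hUb.1
      have key := congrFun (hcent _ hχ) x
      rw [S.conv_indicator_right hUb.2.1 f hxU (S.d_d x),
        S.conv_indicator_left_zero f (fun α hα => by simpa using hUW hα)] at key
      rw [S.inv_d] at key
      rw [show S.mul x (S.d x) = x from S.mul_d x] at key
      exact hfx key
    · -- (2) central implies conjugation invariant
      intro x z hiso hdz
      obtain ⟨U, hzU, -, hUc, hUb⟩ := hAmple z Set.univ (Set.mem_univ z) isOpen_univ
      have hχ := S.indicator_mem (R := R) hUc hUb.1
      have key := congrFun (hcent _ hχ) (S.mul z x)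
      have hc : S.d z = S.r x := hdz.symm.trans hiso
      rw [S.conv_indicator_right hUb.2.1 f hzU (by rw [S.d_mul hc]; exact hdz.symm),
        S.conv_indicator_left hUb.2.2.1 f hzU (S.r_mul'' hc).symm,
        S.inv_mul_cancel_left hc] at key
      exact key
  · -- class function implies central
    intro hclass g hg
    funext γ
    have hmap1 : Set.MapsTo (fun p : G × G => (p.2, S.mul (S.mul (S.inv p.2) p.1) p.2))
        ({p : G × G | S.d p.1 = S.r p.2 ∧ S.mul p.1 p.2 = γ} ∩
          Function.support fun p : G × G => f p.1 * g p.2)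
        ({p : G × G | S.d p.1 = S.r p.2 ∧ S.mul p.1 p.2 = γ} ∩
          Function.support fun p : G × G => g p.1 * f p.2) := by
      rintro ⟨α, β⟩ ⟨⟨hc, hm⟩, hsp⟩
      have hsp' : f α * g β ≠ 0 := hsp
      have hiso : S.d α = S.r α := hclass.1 α (left_ne_zero_of_mul hsp')
      obtain ⟨hc2, hm2⟩ := S.conj_facts hc hiso
      have hfc : f (S.mul (S.mul (S.inv β) α) β) = f α := by
        have := hclass.2 α (S.inv β) hiso (by rw [S.d_inv']; exact hc)
        rwa [S.inv_inv] at this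
      refine ⟨⟨hc2, by rw [hm2, hm]⟩, ?_⟩
      show g β * f (S.mul (S.mul (S.inv β) α) β) ≠ 0
      rw [hfc, mul_comm]; exact hsp'
    have hmap2 : Set.MapsTo (fun p : G × G => (S.mul (S.mul p.1 p.2) (S.inv p.1), p.1))
        ({p : G × G | S.d p.1 = S.r p.2 ∧ S.mul p.1 p.2 = γ} ∩
          Function.support fun p : G × G => g p.1 * f p.2)
        ({p : G × G | S.d p.1 = S.r p.2 ∧ S.mul p.1 p.2 = γ} ∩
          Function.support fun p : G × G => f p.1 * g p.2) := by
      rintro ⟨α, β⟩ ⟨⟨hc, hm⟩, hsp⟩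
      have hsp' : g α * f β ≠ 0 := hsp
      have hiso : S.d β = S.r β := hclass.1 β (right_ne_zero_of_mul hsp')
      obtain ⟨hc2, hm2⟩ := S.conj_facts' hc hiso
      have hfa : f (S.mul (S.mul α β) (S.inv α)) = f β :=
        hclass.2 β α hiso (hiso.trans hc.symm)
      refine ⟨⟨hc2, by rw [hm2, hm]⟩, ?_⟩
      show f (S.mul (S.mul α β) (S.inv α)) * g α ≠ 0
      rw [hfa, mul_comm]; exact hsp'
    have hinv : Set.InvOn (fun p : G × G => (S.mul (S.mul p.1 p.2) (S.inv p.1), p.1))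
        (fun p : G × G => (p.2, S.mul (S.mul (S.inv p.2) p.1) p.2))
        ({p : G × G | S.d p.1 = S.r p.2 ∧ S.mul p.1 p.2 = γ} ∩
          Function.support fun p : G × G => f p.1 * g p.2)
        ({p : G × G | S.d p.1 = S.r p.2 ∧ S.mul p.1 p.2 = γ} ∩
          Function.support fun p : G × G => g p.1 * f p.2) := by
      constructor
      · rintro ⟨α, β⟩ ⟨⟨hc, hm⟩, hsp⟩
        have hiso : S.d α = S.r α := hclass.1 α (left_ne_zero_of_mul hsp)
        obtain ⟨hc2, hm2⟩ := S.conj_facts hc hiso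
        show (S.mul (S.mul β (S.mul (S.mul (S.inv β) α) β)) (S.inv β), β) = (α, β)
        rw [hm2, S.mul_inv_cancel_right hc]
      · rintro ⟨α, β⟩ ⟨⟨hc, hm⟩, hsp⟩
        have hiso : S.d β = S.r β := hclass.1 β (right_ne_zero_of_mul hsp)
        show (α, S.mul (S.mul (S.inv α) (S.mul (S.mul α β) (S.inv α))) α) = (α, β)
        have h1 : S.d (S.mul α β) = S.r (S.inv α) := by
          rw [S.d_mul hc, S.r_inv', hiso, ← hc]
        have hia : S.d (S.inv α) = S.r (S.mul α β) := by
          rw [S.d_inv', S.r_mul'' hc]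
        have step1 : S.mul (S.inv α) (S.mul (S.mul α β) (S.inv α))
            = S.mul β (S.inv α) := by
          rw [← S.assoc' hia h1, S.inv_mul_cancel_left hc]
        rw [step1, S.assoc' (by rw [S.r_inv']; exact hiso.trans hc.symm) (S.d_inv' α)]
        show (α, S.mul β (S.d α)) = (α, β)
        rw [show S.d α = S.d β from hc.trans hiso.symm,
          show S.mul β (S.d β) = β from S.mul_d β]
    calc S.conv f g γ
        = ∑ᶠ p ∈ ({p : G × G | S.d p.1 = S.r p.2 ∧ S.mul p.1 p.2 = γ} ∩
            Function.support fun p : G × G => f p.1 * g p.2), f p.1 * g p.2 :=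
          (finsum_mem_inter_support _ _).symm
      _ = ∑ᶠ p ∈ ({p : G × G | S.d p.1 = S.r p.2 ∧ S.mul p.1 p.2 = γ} ∩
            Function.support fun p : G × G => g p.1 * f p.2), g p.1 * f p.2 := by
          refine finsum_mem_eq_of_bijOn _ (hinv.bijOn hmap1 hmap2) ?_
          rintro ⟨α, β⟩ ⟨⟨hc, hm⟩, hsp⟩
          have hiso : S.d α = S.r α := hclass.1 α (left_ne_zero_of_mul hsp)
          have hfc : f (S.mul (S.mul (S.inv β) α) β) = f α := by
            have := hclass.2 α (S.inv β) hiso (by rw [S.d_inv']; exact hc)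
            rwa [S.inv_inv] at this
          show f α * g β = g β * f (S.mul (S.mul (S.inv β) α) β)
          rw [hfc, mul_comm]
      _ = S.conv g f γ := finsum_mem_inter_support _ _
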